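/- Let n ≥ 1 and let Φ : ℝⁿ → ℝⁿ be a bijective C^∞ map with C^∞ inverse; for g : ℝⁿ → ℝ and s ∈ {1,…,n} define D̂_s g := (∂_s(g ∘ Φ^{−1})) ∘ Φ. Let S ⊆ {1,…,n}, and let b_{ij} (i,j ∈ S) and h be C^∞ functions ℝⁿ → ℝ with b_{ij} = b_{ji}. Define b̂_{sr} := ∑_{i,j∈S} b_{ij} · (∂_i Φ_s)(∂_j Φ_r) for s,r ∈ {1,…,n}. Then at every point of ℝⁿ: ∑_{i,j∈S} ∂_i ∂_j (b_{ij} h) = ∑_{s,r=1}^n D̂_s D̂_r (b̂_{sr} h) + ∑_{s=1}^n D̂_s [ h · ∑_{i,j∈S} b_{ij} · ( ∂_i ∂_j Φ_s − 2 ∑_{r=1}^n D̂_r[(∂_i Φ_s)(∂_j Φ_r)] ) ] + h · ∑_{i,j∈S} b_{ij} · ( ∑_{s,r=1}^n D̂_s D̂_r [(∂_i Φ_s)(∂_j Φ_r)] − ∑_{s=1}^n D̂_s [∂_i ∂_j Φ_s] ). -/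

import Mathlib

noncomputable section

/-- Partial derivative in the `i`-th coordinate of `ℝⁿ`. -/
def pd {n : ℕ} (i : Fin n) (f : (Fin n → ℝ) → ℝ) (y : Fin n → ℝ) : ℝ :=
  fderiv ℝ f y (Pi.single i 1)

/-- The derivative in the `s`-th new coordinate: `D̂_s g = (∂_s (g ∘ Φ⁻¹)) ∘ Φ`,
where `Ψ = Φ⁻¹`. -/
def Dhat {n : ℕ} (Φ Ψ : (Fin n → ℝ) → (Fin n → ℝ)) (s : Fin n)
    (g : (Fin n → ℝ) → ℝ) (y : Fin n → ℝ) : ℝ :=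
  fderiv ℝ (g ∘ Ψ) (Φ y) (Pi.single s 1)

lemma contDiff_pd {n : ℕ} {f : (Fin n → ℝ) → ℝ} (hf : ContDiff ℝ (⊤ : ℕ∞) f) (i : Fin n) :
    ContDiff ℝ (⊤ : ℕ∞) (pd i f) := by
  unfold pd; exact (hf.fderiv_right (by simp)).clm_apply contDiff_const

lemma pd_mul {n : ℕ} {f g : (Fin n → ℝ) → ℝ} (hf : ContDiff ℝ (⊤ : ℕ∞) f) (hg : ContDiff ℝ (⊤ : ℕ∞) g)
    (i : Fin n) (y : Fin n → ℝ) :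
    pd i (fun z => f z * g z) y = f y * pd i g y + g y * pd i f y := by
  unfold pd
  rw [fderiv_fun_mul (hf.differentiable (by simp) y) (hg.differentiable (by simp) y)]
  simp

lemma pd_add {n : ℕ} {f g : (Fin n → ℝ) → ℝ} (hf : ContDiff ℝ (⊤ : ℕ∞) f) (hg : ContDiff ℝ (⊤ : ℕ∞) g)
    (i : Fin n) (y : Fin n → ℝ) :
    pd i (fun z => f z + g z) y = pd i f y + pd i g y := by
  unfold pd
  rw [fderiv_fun_add (hf.differentiable (by simp) y) (hg.differentiable (by simp) y)]
  simp

lemma pd_sub {n : ℕ} {f g : (Fin n → ℝ) → ℝ} (hf : ContDiff ℝ (⊤ : ℕ∞) f) (hg : ContDiff ℝ (⊤ : ℕ∞) g)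
    (i : Fin n) (y : Fin n → ℝ) :
    pd i (fun z => f z - g z) y = pd i f y - pd i g y := by
  unfold pd
  rw [fderiv_fun_sub (hf.differentiable (by simp) y) (hg.differentiable (by simp) y)]
  simp

lemma pd_sum {n : ℕ} {ι : Type*} (T : Finset ι) {f : ι → (Fin n → ℝ) → ℝ}
    (hf : ∀ k ∈ T, ContDiff ℝ (⊤ : ℕ∞) (f k)) (i : Fin n) (y : Fin n → ℝ) :
    pd i (fun z => ∑ k ∈ T, f k z) y = ∑ k ∈ T, pd i (f k) y := by
  unfold pd
  rw [fderiv_fun_sum (fun k hk => (hf k hk).differentiable (by simp) y)]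
  simp

lemma sum_comm4 {M : Type*} [AddCommMonoid M] {a b c d : Type*} (A : Finset a) (B : Finset b)
    (C : Finset c) (D : Finset d) (f : a → b → c → d → M) :
    ∑ s ∈ A, ∑ r ∈ B, ∑ i ∈ C, ∑ j ∈ D, f s r i j
      = ∑ i ∈ C, ∑ j ∈ D, ∑ s ∈ A, ∑ r ∈ B, f s r i j := by
  calc ∑ s ∈ A, ∑ r ∈ B, ∑ i ∈ C, ∑ j ∈ D, f s r i j
      = ∑ s ∈ A, ∑ i ∈ C, ∑ r ∈ B, ∑ j ∈ D, f s r i j :=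
        Finset.sum_congr rfl fun s _ => Finset.sum_comm
    _ = ∑ i ∈ C, ∑ s ∈ A, ∑ r ∈ B, ∑ j ∈ D, f s r i j := Finset.sum_comm
    _ = ∑ i ∈ C, ∑ s ∈ A, ∑ j ∈ D, ∑ r ∈ B, f s r i j :=
        Finset.sum_congr rfl fun i _ => Finset.sum_congr rfl fun s _ => Finset.sum_comm
    _ = ∑ i ∈ C, ∑ j ∈ D, ∑ s ∈ A, ∑ r ∈ B, f s r i j :=
        Finset.sum_congr rfl fun i _ => Finset.sum_comm

lemma sum_comm3 {M : Type*} [AddCommMonoid M] {a c d : Type*} (A : Finset a)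
    (C : Finset c) (D : Finset d) (f : a → c → d → M) :
    ∑ s ∈ A, ∑ i ∈ C, ∑ j ∈ D, f s i j = ∑ i ∈ C, ∑ j ∈ D, ∑ s ∈ A, f s i j :=
  calc ∑ s ∈ A, ∑ i ∈ C, ∑ j ∈ D, f s i j = ∑ i ∈ C, ∑ s ∈ A, ∑ j ∈ D, f s i j := Finset.sum_comm
    _ = ∑ i ∈ C, ∑ j ∈ D, ∑ s ∈ A, f s i j :=
        Finset.sum_congr rfl fun i _ => Finset.sum_comm

lemma key {n : ℕ} (S : Finset (Fin n)) (B : Fin n → Fin n → (Fin n → ℝ) → ℝ)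
    (H : (Fin n → ℝ) → ℝ) (F : Fin n → Fin n → (Fin n → ℝ) → ℝ)
    (G : Fin n → Fin n → Fin n → (Fin n → ℝ) → ℝ)
    (hB : ∀ i ∈ S, ∀ j ∈ S, ContDiff ℝ (⊤ : ℕ∞) (B i j)) (hH : ContDiff ℝ (⊤ : ℕ∞) H)
    (hF : ∀ i s, ContDiff ℝ (⊤ : ℕ∞) (F i s)) (hG : ∀ i j s, ContDiff ℝ (⊤ : ℕ∞) (G i j s))
    (hBs : ∀ i ∈ S, ∀ j ∈ S, B i j = B j i) (x : Fin n → ℝ) :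
    (∑ i ∈ S, ∑ j ∈ S, (∑ s, G i j s x * pd s (fun z => B i j z * H z) x
        + ∑ s, ∑ r, F j s x * F i r x * pd r (pd s (fun z => B i j z * H z)) x))
    = (∑ s, ∑ r, pd s (pd r (fun z =>
          (∑ i ∈ S, ∑ j ∈ S, B i j z * F i s z * F j r z) * H z)) x)
      + (∑ s, pd s (fun z => H z * ∑ i ∈ S, ∑ j ∈ S, B i j z *
          (G i j s z - 2 * ∑ r, pd r (fun w => F i s w * F j r w) z)) x)
      + H x * ∑ i ∈ S, ∑ j ∈ S, B i j x *
          ((∑ s, ∑ r, pd s (pd r (fun w => F i s w * F j r w)) x)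
            - ∑ s, pd s (G i j s) x) := by
  -- smoothness abbreviations
  have hc : ∀ i ∈ S, ∀ j ∈ S, ContDiff ℝ (⊤ : ℕ∞) (fun z => B i j z * H z) :=
    fun i hi j hj => (hB i hi j hj).mul hH
  have hP : ∀ i j s r, ContDiff ℝ (⊤ : ℕ∞) (fun z => F i s z * F j r z) :=
    fun i j s r => (hF i s).mul (hF j r)
  -- Expansion of the first RHS term
  have E1 : ∀ s r : Fin n,
      pd s (pd r (fun z => (∑ i ∈ S, ∑ j ∈ S, B i j z * F i s z * F j r z) * H z)) x
      = ∑ i ∈ S, ∑ j ∈ S,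
          (F i s x * F j r x * pd s (pd r (fun z => B i j z * H z)) x
           + pd s (fun z => F i s z * F j r z) x * pd r (fun z => B i j z * H z) x
           + pd r (fun z => F i s z * F j r z) x * pd s (fun z => B i j z * H z) x
           + B i j x * H x * pd s (pd r (fun z => F i s z * F j r z)) x) := by
    intro s r
    have h0 : (fun z => (∑ i ∈ S, ∑ j ∈ S, B i j z * F i s z * F j r z) * H z)
        = fun z => ∑ i ∈ S, ∑ j ∈ S, (F i s z * F j r z) * (B i j z * H z) := by
      funext z
      rw [Finset.sum_mul]
      refine Finset.sum_congr rfl fun i _ => ?_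
      rw [Finset.sum_mul]
      exact Finset.sum_congr rfl fun j _ => by ring
    rw [h0]
    have h1 : pd r (fun z => ∑ i ∈ S, ∑ j ∈ S, (F i s z * F j r z) * (B i j z * H z))
        = fun w => ∑ i ∈ S, ∑ j ∈ S,
            ((F i s w * F j r w) * pd r (fun z => B i j z * H z) w
              + (B i j w * H w) * pd r (fun z => F i s z * F j r z) w) := by
      funext w
      rw [pd_sum S (fun i hi => ContDiff.sum fun j hj => (hP i j s r).mul (hc i hi j hj)) r w]
      refine Finset.sum_congr rfl fun i hi => ?_
      rw [pd_sum S (fun j hj => (hP i j s r).mul (hc i hi j hj)) r w]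
      refine Finset.sum_congr rfl fun j hj => ?_
      rw [pd_mul (hP i j s r) (hc i hi j hj) r w]
    rw [h1]
    rw [pd_sum S (fun i hi => ContDiff.sum fun j hj =>
      ((hP i j s r).mul (contDiff_pd (hc i hi j hj) r)).add
        ((hc i hi j hj).mul (contDiff_pd (hP i j s r) r))) s x]
    refine Finset.sum_congr rfl fun i hi => ?_
    rw [pd_sum S (fun j hj =>
      ((hP i j s r).mul (contDiff_pd (hc i hi j hj) r)).add
        ((hc i hi j hj).mul (contDiff_pd (hP i j s r) r))) s x]
    refine Finset.sum_congr rfl fun j hj => ?_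
    rw [pd_add ((hP i j s r).mul (contDiff_pd (hc i hi j hj) r))
      ((hc i hi j hj).mul (contDiff_pd (hP i j s r) r)) s x,
      pd_mul (hP i j s r) (contDiff_pd (hc i hi j hj) r) s x,
      pd_mul (hc i hi j hj) (contDiff_pd (hP i j s r) r) s x]
    ring
  -- Expansion of the second RHS term
  have E2 : ∀ s : Fin n,
      pd s (fun z => H z * ∑ i ∈ S, ∑ j ∈ S, B i j z *
          (G i j s z - 2 * ∑ r, pd r (fun w => F i s w * F j r w) z)) x
      = ∑ i ∈ S, ∑ j ∈ S,
          (B i j x * H x * pd s (G i j s) x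
            + G i j s x * pd s (fun z => B i j z * H z) x
            - ∑ r, ((B i j x * H x * pd s (pd r (fun z => F i s z * F j r z)) x
                + pd r (fun z => F i s z * F j r z) x * pd s (fun z => B i j z * H z) x)
              + (B i j x * H x * pd s (pd r (fun z => F i s z * F j r z)) x
                + pd r (fun z => F i s z * F j r z) x * pd s (fun z => B i j z * H z) x))) := by
    intro s
    have h2 : (fun z => H z * ∑ i ∈ S, ∑ j ∈ S, B i j z *
          (G i j s z - 2 * ∑ r, pd r (fun w => F i s w * F j r w) z))
        = fun z => ∑ i ∈ S, ∑ j ∈ S,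
            ((B i j z * H z) * G i j s z
              - ∑ r, ((B i j z * H z) * pd r (fun w => F i s w * F j r w) z
                  + (B i j z * H z) * pd r (fun w => F i s w * F j r w) z)) := by
      funext z
      rw [Finset.mul_sum]
      refine Finset.sum_congr rfl fun i _ => ?_
      rw [Finset.mul_sum]
      refine Finset.sum_congr rfl fun j _ => ?_
      rw [Finset.sum_add_distrib, ← Finset.mul_sum]
      ring
    rw [h2]
    have hsm : ∀ i ∈ S, ∀ j ∈ S, ContDiff ℝ (⊤ : ℕ∞) (fun z =>
        (B i j z * H z) * G i j s z
          - ∑ r, ((B i j z * H z) * pd r (fun w => F i s w * F j r w) z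
              + (B i j z * H z) * pd r (fun w => F i s w * F j r w) z)) := by
      intro i hi j hj
      exact ((hc i hi j hj).mul (hG i j s)).sub (ContDiff.sum fun r _ =>
        ((hc i hi j hj).mul (contDiff_pd (hP i j s r) r)).add
          ((hc i hi j hj).mul (contDiff_pd (hP i j s r) r)))
    rw [pd_sum S (fun i hi => ContDiff.sum fun j hj => hsm i hi j hj) s x]
    refine Finset.sum_congr rfl fun i hi => ?_
    rw [pd_sum S (fun j hj => hsm i hi j hj) s x]
    refine Finset.sum_congr rfl fun j hj => ?_
    rw [pd_sub ((hc i hi j hj).mul (hG i j s)) (ContDiff.sum fun r _ =>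
        ((hc i hi j hj).mul (contDiff_pd (hP i j s r) r)).add
          ((hc i hi j hj).mul (contDiff_pd (hP i j s r) r))) s x,
      pd_mul (hc i hi j hj) (hG i j s) s x,
      pd_sum Finset.univ (fun r _ =>
        ((hc i hi j hj).mul (contDiff_pd (hP i j s r) r)).add
          ((hc i hi j hj).mul (contDiff_pd (hP i j s r) r))) s x]
    have hr : ∀ r : Fin n,
        pd s (fun z => (B i j z * H z) * pd r (fun w => F i s w * F j r w) z
            + (B i j z * H z) * pd r (fun w => F i s w * F j r w) z) x
        = (B i j x * H x * pd s (pd r (fun z => F i s z * F j r z)) x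
            + pd r (fun z => F i s z * F j r z) x * pd s (fun z => B i j z * H z) x)
          + (B i j x * H x * pd s (pd r (fun z => F i s z * F j r z)) x
            + pd r (fun z => F i s z * F j r z) x * pd s (fun z => B i j z * H z) x) := by
      intro r
      rw [pd_add ((hc i hi j hj).mul (contDiff_pd (hP i j s r) r))
          ((hc i hi j hj).mul (contDiff_pd (hP i j s r) r)) s x,
        pd_mul (hc i hi j hj) (contDiff_pd (hP i j s r) r) s x]
    rw [Finset.sum_congr rfl fun r _ => hr r]
  -- Expansion of the third RHS term
  have mul_sum2 : ∀ (a : ℝ) (f : Fin n → Fin n → ℝ),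
      (∑ s : Fin n, ∑ r : Fin n, a * f s r) = a * ∑ s : Fin n, ∑ r : Fin n, f s r := by
    intro a f
    rw [Finset.mul_sum]
    exact Finset.sum_congr rfl fun s _ => (Finset.mul_sum _ _ _).symm
  have E3 : H x * ∑ i ∈ S, ∑ j ∈ S, B i j x *
        ((∑ s, ∑ r, pd s (pd r (fun w => F i s w * F j r w)) x) - ∑ s, pd s (G i j s) x)
      = ∑ i ∈ S, ∑ j ∈ S,
          ((∑ s : Fin n, ∑ r : Fin n,
              B i j x * H x * pd s (pd r (fun z => F i s z * F j r z)) x)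
            - ∑ s : Fin n, B i j x * H x * pd s (G i j s) x) := by
    rw [Finset.mul_sum]
    refine Finset.sum_congr rfl fun i _ => ?_
    rw [Finset.mul_sum]
    refine Finset.sum_congr rfl fun j _ => ?_
    rw [mul_sum2, ← Finset.mul_sum]
    ring
  -- convert the three RHS terms
  have hT1 : (∑ s, ∑ r, pd s (pd r (fun z =>
        (∑ i ∈ S, ∑ j ∈ S, B i j z * F i s z * F j r z) * H z)) x)
      = ∑ i ∈ S, ∑ j ∈ S, ∑ s : Fin n, ∑ r : Fin n,
          (F i s x * F j r x * pd s (pd r (fun z => B i j z * H z)) x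
           + pd s (fun z => F i s z * F j r z) x * pd r (fun z => B i j z * H z) x
           + pd r (fun z => F i s z * F j r z) x * pd s (fun z => B i j z * H z) x
           + B i j x * H x * pd s (pd r (fun z => F i s z * F j r z)) x) := by
    rw [Finset.sum_congr rfl fun s (_ : s ∈ Finset.univ) =>
      Finset.sum_congr rfl fun r (_ : r ∈ Finset.univ) => E1 s r]
    exact sum_comm4 _ _ _ _ _
  have hT2 : (∑ s, pd s (fun z => H z * ∑ i ∈ S, ∑ j ∈ S, B i j z *
        (G i j s z - 2 * ∑ r, pd r (fun w => F i s w * F j r w) z)) x)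
      = ∑ i ∈ S, ∑ j ∈ S, ∑ s : Fin n,
          (B i j x * H x * pd s (G i j s) x
            + G i j s x * pd s (fun z => B i j z * H z) x
            - ∑ r : Fin n, ((B i j x * H x * pd s (pd r (fun z => F i s z * F j r z)) x
                + pd r (fun z => F i s z * F j r z) x * pd s (fun z => B i j z * H z) x)
              + (B i j x * H x * pd s (pd r (fun z => F i s z * F j r z)) x
                + pd r (fun z => F i s z * F j r z) x * pd s (fun z => B i j z * H z) x))) := by
    rw [Finset.sum_congr rfl fun s (_ : s ∈ Finset.univ) => E2 s]
    exact sum_comm3 _ _ _ _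
  rw [hT1, hT2, E3]
  -- the skew-symmetric cross terms cancel in the double sum
  have hXY : (∑ i ∈ S, ∑ j ∈ S, ∑ s : Fin n, ∑ r : Fin n,
        pd s (fun z => F i s z * F j r z) x * pd r (fun z => B i j z * H z) x)
      = ∑ i ∈ S, ∑ j ∈ S, ∑ s : Fin n, ∑ r : Fin n,
        pd r (fun z => F i s z * F j r z) x * pd s (fun z => B i j z * H z) x := by
    rw [Finset.sum_comm]
    refine Finset.sum_congr rfl fun i hi => Finset.sum_congr rfl fun j hj => ?_
    rw [Finset.sum_comm]
    refine Finset.sum_congr rfl fun s _ => Finset.sum_congr rfl fun r _ => ?_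
    rw [show (fun z => F j r z * F i s z) = (fun z => F i s z * F j r z) from
        funext fun z => mul_comm _ _,
      show B j i = B i j from (hBs j hj i hi)]
  -- per (i,j) algebraic identity
  have hij : ∀ i ∈ S, ∀ j ∈ S,
      (∑ s : Fin n, ∑ r : Fin n,
          (F i s x * F j r x * pd s (pd r (fun z => B i j z * H z)) x
           + pd s (fun z => F i s z * F j r z) x * pd r (fun z => B i j z * H z) x
           + pd r (fun z => F i s z * F j r z) x * pd s (fun z => B i j z * H z) x
           + B i j x * H x * pd s (pd r (fun z => F i s z * F j r z)) x))
      + (∑ s : Fin n,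
          (B i j x * H x * pd s (G i j s) x
            + G i j s x * pd s (fun z => B i j z * H z) x
            - ∑ r : Fin n, ((B i j x * H x * pd s (pd r (fun z => F i s z * F j r z)) x
                + pd r (fun z => F i s z * F j r z) x * pd s (fun z => B i j z * H z) x)
              + (B i j x * H x * pd s (pd r (fun z => F i s z * F j r z)) x
                + pd r (fun z => F i s z * F j r z) x * pd s (fun z => B i j z * H z) x))))
      + ((∑ s : Fin n, ∑ r : Fin n,
            B i j x * H x * pd s (pd r (fun z => F i s z * F j r z)) x)
          - ∑ s : Fin n, B i j x * H x * pd s (G i j s) x)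
      = (∑ s, G i j s x * pd s (fun z => B i j z * H z) x
          + ∑ s, ∑ r, F j s x * F i r x * pd r (pd s (fun z => B i j z * H z)) x)
        + (∑ s : Fin n, ∑ r : Fin n,
            pd s (fun z => F i s z * F j r z) x * pd r (fun z => B i j z * H z) x)
        - ∑ s : Fin n, ∑ r : Fin n,
            pd r (fun z => F i s z * F j r z) x * pd s (fun z => B i j z * H z) x := by
    intro i hi j hj
    have hrel : (∑ s : Fin n, ∑ r : Fin n,
          F j s x * F i r x * pd r (pd s (fun z => B i j z * H z)) x)
        = ∑ s : Fin n, ∑ r : Fin n,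
            F i s x * F j r x * pd s (pd r (fun z => B i j z * H z)) x := by
      rw [Finset.sum_comm]
      exact Finset.sum_congr rfl fun s _ => Finset.sum_congr rfl fun r _ => by ring
    rw [hrel]
    simp only [Finset.sum_add_distrib, Finset.sum_sub_distrib]
    ring
  calc (∑ i ∈ S, ∑ j ∈ S, (∑ s, G i j s x * pd s (fun z => B i j z * H z) x
        + ∑ s, ∑ r, F j s x * F i r x * pd r (pd s (fun z => B i j z * H z)) x))
      = ∑ i ∈ S, ∑ j ∈ S,
          ((∑ s, G i j s x * pd s (fun z => B i j z * H z) x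
            + ∑ s, ∑ r, F j s x * F i r x * pd r (pd s (fun z => B i j z * H z)) x)
           + (∑ s : Fin n, ∑ r : Fin n,
              pd s (fun z => F i s z * F j r z) x * pd r (fun z => B i j z * H z) x)
           - ∑ s : Fin n, ∑ r : Fin n,
              pd r (fun z => F i s z * F j r z) x * pd s (fun z => B i j z * H z) x) := by
        simp only [Finset.sum_add_distrib, Finset.sum_sub_distrib]
        rw [hXY]
        ring
    _ = _ := by
        rw [Finset.sum_congr rfl fun i hi => Finset.sum_congr rfl fun j hj =>
          (hij i hi j hj).symm]
        simp only [Finset.sum_add_distrib]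


lemma pd_coord {n : ℕ} {Φ : (Fin n → ℝ) → (Fin n → ℝ)} (hΦ : ContDiff ℝ (⊤ : ℕ∞) Φ)
    (s i : Fin n) (y : Fin n → ℝ) :
    pd i (fun w => Φ w s) y = fderiv ℝ Φ y (Pi.single i 1) s := by
  have h := ((ContinuousLinearMap.proj s : (Fin n → ℝ) →L[ℝ] ℝ).hasFDerivAt.comp y
    (hΦ.differentiable (by simp) y).hasFDerivAt).fderiv
  unfold pd
  rw [show (fun w => Φ w s) = (ContinuousLinearMap.proj s : (Fin n → ℝ) →L[ℝ] ℝ) ∘ Φ from rfl, h]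
  rfl

lemma Dhat_eq {n : ℕ} (Φ Ψ : (Fin n → ℝ) → (Fin n → ℝ)) (s : Fin n)
    (g : (Fin n → ℝ) → ℝ) (y : Fin n → ℝ) :
    Dhat Φ Ψ s g y = pd s (g ∘ Ψ) (Φ y) := rfl

lemma Dhat_Dhat {n : ℕ} {Φ Ψ : (Fin n → ℝ) → (Fin n → ℝ)}
    (hinv₂ : Function.RightInverse Ψ Φ) (s r : Fin n)
    (g : (Fin n → ℝ) → ℝ) (y : Fin n → ℝ) :
    Dhat Φ Ψ s (Dhat Φ Ψ r g) y = pd s (pd r (g ∘ Ψ)) (Φ y) := by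
  have : (Dhat Φ Ψ r g) ∘ Ψ = pd r (g ∘ Ψ) := by
    funext x
    simp only [Function.comp, Dhat, pd, hinv₂ x]
  rw [Dhat_eq, this]

lemma pd_chain {n : ℕ} {Φ Ψ : (Fin n → ℝ) → (Fin n → ℝ)}
    (hΦ : ContDiff ℝ (⊤ : ℕ∞) Φ) (hΨ : ContDiff ℝ (⊤ : ℕ∞) Ψ)
    (hinv₁ : Function.LeftInverse Ψ Φ)
    {g : (Fin n → ℝ) → ℝ} (hg : ContDiff ℝ (⊤ : ℕ∞) g) (i : Fin n) (y : Fin n → ℝ) :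
    pd i g y = ∑ s, pd i (fun w => Φ w s) y * Dhat Φ Ψ s g y := by
  have hgd : DifferentiableAt ℝ (g ∘ Ψ) (Φ y) :=
    ((hg.comp hΨ).differentiable (by simp)) (Φ y)
  have hΦd : DifferentiableAt ℝ Φ y := (hΦ.differentiable (by simp)) y
  have hfg : fderiv ℝ g y = (fderiv ℝ (g ∘ Ψ) (Φ y)).comp (fderiv ℝ Φ y) := by
    nth_rewrite 1 [show g = (g ∘ Ψ) ∘ Φ from funext fun z => by simp [Function.comp, hinv₁ z]]
    exact fderiv_comp y hgd hΦd
  have hcomp : pd i g y = fderiv ℝ (g ∘ Ψ) (Φ y) (fderiv ℝ Φ y (Pi.single i 1)) := by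
    unfold pd; rw [hfg]; rfl
  rw [hcomp]
  set L := fderiv ℝ (g ∘ Ψ) (Φ y)
  set v := fderiv ℝ Φ y (Pi.single i 1) with hv
  have hvs : v = ∑ s, (v s) • (Pi.single s 1 : Fin n → ℝ) := by
    funext t
    simp [Finset.sum_apply, Pi.single_apply]
  rw [hvs, map_sum]
  refine Finset.sum_congr rfl fun s _ => ?_
  rw [map_smul, pd_coord hΦ s i y]
  rfl

lemma conv {n : ℕ} {Φ Ψ : (Fin n → ℝ) → (Fin n → ℝ)}
    (hΦ : ContDiff ℝ (⊤ : ℕ∞) Φ) (hΨ : ContDiff ℝ (⊤ : ℕ∞) Ψ)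
    (hinv₁ : Function.LeftInverse Ψ Φ) (hinv₂ : Function.RightInverse Ψ Φ)
    {g : (Fin n → ℝ) → ℝ} (hg : ContDiff ℝ (⊤ : ℕ∞) g) (i j : Fin n) (y : Fin n → ℝ) :
    pd i (pd j g) y = (∑ s, pd i (pd j (fun w => Φ w s)) y * pd s (g ∘ Ψ) (Φ y))
      + ∑ s, ∑ r, pd j (fun w => Φ w s) y * pd i (fun w => Φ w r) y
          * pd r (pd s (g ∘ Ψ)) (Φ y) := by
  have hΦs : ∀ s : Fin n, ContDiff ℝ (⊤ : ℕ∞) (fun w => Φ w s) := fun s => contDiff_pi.mp hΦ s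
  have hgt : ContDiff ℝ (⊤ : ℕ∞) (g ∘ Ψ) := hg.comp hΨ
  have hDhat : ∀ s : Fin n, ContDiff ℝ (⊤ : ℕ∞) (Dhat Φ Ψ s g) :=
    fun s => (contDiff_pd hgt s).comp hΦ
  have h1 : pd j g = fun y' => ∑ s, pd j (fun w => Φ w s) y' * Dhat Φ Ψ s g y' :=
    funext fun y' => pd_chain hΦ hΨ hinv₁ hg j y'
  rw [h1, pd_sum Finset.univ (fun s _ => (contDiff_pd (hΦs s) j).mul (hDhat s)) i y]
  have h2 : ∀ s : Fin n,
      pd i (fun y' => pd j (fun w => Φ w s) y' * Dhat Φ Ψ s g y') y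
      = pd i (pd j (fun w => Φ w s)) y * pd s (g ∘ Ψ) (Φ y)
        + ∑ r, pd j (fun w => Φ w s) y * pd i (fun w => Φ w r) y
            * pd r (pd s (g ∘ Ψ)) (Φ y) := by
    intro s
    rw [pd_mul (contDiff_pd (hΦs s) j) (hDhat s) i y,
      pd_chain hΦ hΨ hinv₁ (hDhat s) i y]
    have h3 : ∀ r : Fin n, Dhat Φ Ψ r (Dhat Φ Ψ s g) y = pd r (pd s (g ∘ Ψ)) (Φ y) :=
      fun r => Dhat_Dhat hinv₂ r s g y
    rw [Finset.sum_congr rfl fun r _ => congrArg (fun t => pd i (fun w => Φ w r) y * t) (h3 r)]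
    rw [Finset.mul_sum, Dhat_eq]
    rw [add_comm]
    congr 1
    · exact mul_comm _ _
    · exact Finset.sum_congr rfl fun r _ => by ring
  rw [Finset.sum_congr rfl fun s _ => h2 s, Finset.sum_add_distrib]

/-- change of variables for the second order terms: with
`b̂_{sr} = ∑_{i,j∈S} b_{ij} (∂_i Φ_s)(∂_j Φ_r)`,
`∑_{i,j∈S} ∂_i ∂_j (b_{ij} h) = ∑_{s,r} D̂_s D̂_r (b̂_{sr} h)
 + ∑_s D̂_s [ h ∑_{i,j∈S} b_{ij} (∂_i∂_jΦ_s − 2∑_r D̂_r[(∂_iΦ_s)(∂_jΦ_r)]) ]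
 + h ∑_{i,j∈S} b_{ij} ( ∑_{s,r} D̂_s D̂_r[(∂_iΦ_s)(∂_jΦ_r)] − ∑_s D̂_s[∂_i∂_jΦ_s] )`. -/
theorem stmt18 (n : ℕ) (hn : 1 ≤ n)
    (Φ Ψ : (Fin n → ℝ) → (Fin n → ℝ))
    (hbij : Function.Bijective Φ)
    (hΦ : ContDiff ℝ (⊤ : ℕ∞) Φ) (hΨ : ContDiff ℝ (⊤ : ℕ∞) Ψ)
    (hinv₁ : Function.LeftInverse Ψ Φ) (hinv₂ : Function.RightInverse Ψ Φ)
    (S : Finset (Fin n))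
    (b : Fin n → Fin n → (Fin n → ℝ) → ℝ) (h : (Fin n → ℝ) → ℝ)
    (hb : ∀ i ∈ S, ∀ j ∈ S, ContDiff ℝ (⊤ : ℕ∞) (b i j)) (hh : ContDiff ℝ (⊤ : ℕ∞) h)
    (hbsymm : ∀ i ∈ S, ∀ j ∈ S, b i j = b j i) :
    ∀ y : Fin n → ℝ,
      (∑ i ∈ S, ∑ j ∈ S, pd i (pd j (fun z => b i j z * h z)) y)
        = (∑ s, ∑ r, Dhat Φ Ψ s (Dhat Φ Ψ r
              (fun z => (∑ i ∈ S, ∑ j ∈ S,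
                  b i j z * pd i (fun w => Φ w s) z * pd j (fun w => Φ w r) z)
                * h z)) y)
          + (∑ s, Dhat Φ Ψ s
              (fun z => h z * ∑ i ∈ S, ∑ j ∈ S, b i j z *
                (pd i (pd j (fun w => Φ w s)) z
                  - 2 * ∑ r, Dhat Φ Ψ r
                      (fun w => pd i (fun v => Φ v s) w * pd j (fun v => Φ v r) w) z)) y)
          + h y * ∑ i ∈ S, ∑ j ∈ S, b i j y *
              ((∑ s, ∑ r, Dhat Φ Ψ s (Dhat Φ Ψ r
                  (fun w => pd i (fun v => Φ v s) w * pd j (fun v => Φ v r) w)) y)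
                - ∑ s, Dhat Φ Ψ s (pd i (pd j (fun w => Φ w s))) y) := by
  intro y
  have hΦs : ∀ s : Fin n, ContDiff ℝ (⊤ : ℕ∞) (fun w => Φ w s) := fun s => contDiff_pi.mp hΦ s
  have hinv₂' : ∀ x, Φ (Ψ x) = x := hinv₂
  have K := key S (fun i j w => b i j (Ψ w)) (fun w => h (Ψ w))
    (fun i s w => pd i (fun v => Φ v s) (Ψ w))
    (fun i j s w => pd i (pd j (fun v => Φ v s)) (Ψ w))
    (fun i hi j hj => (hb i hi j hj).comp hΨ) (hh.comp hΨ)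
    (fun i s => (contDiff_pd (hΦs s) i).comp hΨ)
    (fun i j s => (contDiff_pd (contDiff_pd (hΦs s) j) i).comp hΨ)
    (fun i hi j hj => funext fun w => by
      show b i j (Ψ w) = b j i (Ψ w); rw [hbsymm i hi j hj]) (Φ y)
  simp only [hinv₁ y] at K
  -- convert the left-hand side
  rw [Finset.sum_congr rfl fun i hi => Finset.sum_congr rfl fun j hj =>
    conv hΦ hΨ hinv₁ hinv₂ ((hb i hi j hj).mul hh) i j y]
  -- convert the first right-hand term
  have hT1g : ∀ s r : Fin n,
      Dhat Φ Ψ s (Dhat Φ Ψ r (fun z => (∑ i ∈ S, ∑ j ∈ S,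
          b i j z * pd i (fun w => Φ w s) z * pd j (fun w => Φ w r) z) * h z)) y
      = pd s (pd r (fun z => (∑ i ∈ S, ∑ j ∈ S,
          b i j (Ψ z) * pd i (fun v => Φ v s) (Ψ z) * pd j (fun v => Φ v r) (Ψ z))
            * h (Ψ z))) (Φ y) :=
    fun s r => Dhat_Dhat hinv₂ s r _ y
  -- convert the second right-hand term
  have hT2g : ∀ s : Fin n,
      Dhat Φ Ψ s (fun z => h z * ∑ i ∈ S, ∑ j ∈ S, b i j z *
          (pd i (pd j (fun w => Φ w s)) z
            - 2 * ∑ r, Dhat Φ Ψ r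
                (fun w => pd i (fun v => Φ v s) w * pd j (fun v => Φ v r) w) z)) y
      = pd s (fun z => h (Ψ z) * ∑ i ∈ S, ∑ j ∈ S, b i j (Ψ z) *
          (pd i (pd j (fun v => Φ v s)) (Ψ z)
            - 2 * ∑ r, pd r
                (fun w => pd i (fun v => Φ v s) (Ψ w) * pd j (fun v => Φ v r) (Ψ w)) z))
          (Φ y) := by
    intro s
    rw [Dhat_eq]
    congr 1
    funext z
    simp only [Function.comp_def, Dhat, hinv₂']
    rfl
  -- convert the third right-hand term
  have hT3a : ∀ i j s r : Fin n,
      Dhat Φ Ψ s (Dhat Φ Ψ r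
          (fun w => pd i (fun v => Φ v s) w * pd j (fun v => Φ v r) w)) y
      = pd s (pd r (fun w => pd i (fun v => Φ v s) (Ψ w) * pd j (fun v => Φ v r) (Ψ w)))
          (Φ y) :=
    fun i j s r => Dhat_Dhat hinv₂ s r _ y
  have hT3b : ∀ i j s : Fin n,
      Dhat Φ Ψ s (pd i (pd j (fun w => Φ w s))) y
      = pd s (fun w => pd i (pd j (fun v => Φ v s)) (Ψ w)) (Φ y) :=
    fun i j s => Dhat_eq Φ Ψ s _ y
  rw [Finset.sum_congr rfl fun s _ => Finset.sum_congr rfl fun r _ => hT1g s r,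
    Finset.sum_congr rfl fun s _ => hT2g s,
    Finset.sum_congr rfl fun i _ => Finset.sum_congr rfl fun j _ =>
      congrArg (fun t => b i j y * t)
        (congrArg₂ (fun t u => t - u)
          (Finset.sum_congr rfl fun s _ => Finset.sum_congr rfl fun r _ => hT3a i j s r)
          (Finset.sum_congr rfl fun s _ => hT3b i j s))]
  exact K

end
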